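/- Inductive lower bounds on expected runtimes: let t and I be finite expectations such that I harmonizes with t, I is conditionally difference bounded, and Φ_t(I) is finite (where Φ_t is the wp-characteristic function with postexpectation t). If I ⪯ Ψ_t(I) (I is a runtime subinvariant), then I ⪯ lfp Ψ_t, i.e., I is a lower bound on the expected runtime ert(while φ do C)(t) of the loop. -/

import Mathlib

open MeasureTheory Filter Topology
open scoped Classical ENNReal ENat NNReal

/-! Loop model: states `S`, guard `φ : Set S`, loop-body transition probabilities
`μ : S → S → ℝ≥0`. Expectations are functions `S → ℝ≥0∞` with the pointwise order. -/

variable {S : Type*}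

/-- One-step weakest preexpectation of the loop body:
`wpF μ X s = ∑_{s'} μ s s' * X s'`. -/
noncomputable def wpF (μ : S → S → ℝ≥0) (X : S → ℝ≥0∞) (s : S) : ℝ≥0∞ :=
  ∑' s', (μ s s' : ℝ≥0∞) * X s'

/-- The characteristic function `Φ_f` of the loop `while φ do C` with respect to the
postexpectation `f`. -/
noncomputable def Phi (φ : Set S) (μ : S → S → ℝ≥0) (f : S → ℝ≥0∞)
    (X : S → ℝ≥0∞) (s : S) : ℝ≥0∞ :=
  if s ∈ φ then wpF μ X s else f s

theorem Phi_mono (φ : Set S) (μ : S → S → ℝ≥0) (f : S → ℝ≥0∞) :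
    Monotone (Phi φ μ f) := by
  intro X Y h s
  unfold Phi wpF
  split_ifs with hs
  · exact ENNReal.tsum_le_tsum fun s' => mul_le_mul' le_rfl (h s')
  · exact le_rfl

/-- Least fixed point of the characteristic function `Φ_f`,
i.e. the weakest preexpectation `wp(while φ do C)(f)`. -/
noncomputable def lfpPhi (φ : Set S) (μ : S → S → ℝ≥0) (f : S → ℝ≥0∞) : S → ℝ≥0∞ :=
  OrderHom.lfp ⟨Phi φ μ f, Phi_mono φ μ f⟩

/-- A finite expectation: `X s < ∞` for all states. -/
def FinExp (X : S → ℝ≥0∞) : Prop := ∀ s, X s < ⊤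

/-- A bounded expectation: `X s ≤ c` for some constant `c : ℝ≥0`. -/
def BddExp (X : S → ℝ≥0∞) : Prop := ∃ c : ℝ≥0, ∀ s, X s ≤ (c : ℝ≥0∞)

/-- `I` harmonizes with `f` if `I` agrees with `f` on all terminal states (states
outside the guard). -/
def Harmonizes (φ : Set S) (I f : S → ℝ≥0∞) : Prop := ∀ s ∉ φ, I s = f s

/-- `ΔI`: the expected change of `I` within one loop iteration. -/
noncomputable def dExp (φ : Set S) (μ : S → S → ℝ≥0) (I : S → ℝ≥0∞) (s : S) : ℝ≥0∞ :=
  if s ∈ φ then ∑' s', (μ s s' : ℝ≥0∞) * ((I s' - I s) ⊔ (I s - I s')) else 0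

/-- `I` is conditionally difference bounded if `ΔI` is bounded by a constant. -/
def CondDiffBdd (φ : Set S) (μ : S → S → ℝ≥0) (I : S → ℝ≥0∞) : Prop :=
  ∃ c : ℝ≥0, ∀ s, dExp φ μ I s ≤ (c : ℝ≥0∞)

/-! The loop space `Ω := ℕ → S` with its product σ-algebra (`S` discrete). -/

/-- The cylinder set of a finite sequence of states. -/
def Cyl (π : List S) : Set (ℕ → S) := {ϑ | ∀ i : Fin π.length, ϑ i = π.get i}

/-- The σ-algebra `F_n`, generated by the cylinder sets of sequences of length `n+1`. -/
def Fn (n : ℕ) : MeasurableSpace (ℕ → S) :=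
  MeasurableSpace.generateFrom {A | ∃ π : List S, π.length = n + 1 ∧ A = Cyl π}

/-- The shifted filtration `G_n := F_{n+1}`. -/
def Gn (n : ℕ) : MeasurableSpace (ℕ → S) := Fn (n + 1)

/-- One-step transition probability of the loop: from a state `a` inside the guard move
according to `μ`; a state outside the guard is absorbing. -/
noncomputable def stepP (φ : Set S) (μ : S → S → ℝ≥0) (a b : S) : ℝ≥0 :=
  if a ∈ φ then μ a b else if b = a then 1 else 0

/-- Product of the one-step transition probabilities along a finite sequence. -/
noncomputable def chainP (φ : Set S) (μ : S → S → ℝ≥0) : List S → ℝ≥0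
  | [] => 1
  | [_] => 1
  | a :: b :: rest => stepP φ μ a b * chainP φ μ (b :: rest)

/-- The prefix probability `p_s(π)` of the finite sequence `π` of states, starting the
loop in the state `s`. -/
noncomputable def prefP (φ : Set S) (μ : S → S → ℝ≥0) (s : S) (π : List S) : ℝ≥0 :=
  (if π.head? = some s then 1 else 0) * chainP φ μ π

/-- The looping time `τ`: the first time the run leaves the guard. -/
noncomputable def loopT (φ : Set S) (ϑ : ℕ → S) : ℕ∞ :=
  sInf {n : ℕ∞ | ∃ m : ℕ, n = (m : ℕ∞) ∧ ϑ m ∉ φ}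

/-- The stochastic process `X_n^{f,I}` induced by the invariant `I` (w.r.t. the
postexpectation `f`). -/
noncomputable def Xn (φ : Set S) (f I : S → ℝ≥0∞) (n : ℕ) (ϑ : ℕ → S) : ℝ≥0∞ :=
  if loopT φ ϑ ≤ (n : ℕ∞) then f (ϑ (loopT φ ϑ).toNat) else I (ϑ (n + 1))

/-- The stopped process `X_τ^f`. -/
noncomputable def Xstop (φ : Set S) (f : S → ℝ≥0∞) (ϑ : ℕ → S) : ℝ≥0∞ :=
  if loopT φ ϑ < ⊤ then f (ϑ (loopT φ ϑ).toNat) else 0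

/-- The `ert`-characteristic function `Ψ_t` of the loop, where `e` is the expected
runtime of the loop body and `t` is the postruntime. -/
noncomputable def Psi (φ : Set S) (μ : S → S → ℝ≥0) (e t : S → ℝ≥0∞)
    (X : S → ℝ≥0∞) (s : S) : ℝ≥0∞ :=
  if s ∈ φ then 1 + e s + wpF μ X s else 1 + t s

theorem Psi_mono (φ : Set S) (μ : S → S → ℝ≥0) (e t : S → ℝ≥0∞) :
    Monotone (Psi φ μ e t) := by
  intro X Y h s
  unfold Psi wpF
  split_ifs with hs
  · exact add_le_add le_rfl (ENNReal.tsum_le_tsum fun s' => mul_le_mul' le_rfl (h s'))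
  · exact le_rfl

/-- The expected runtime `ert(while φ do C)(t)` of the loop: the least fixed point of the
`ert`-characteristic function `Ψ_t`. -/
noncomputable def lfpPsi (φ : Set S) (μ : S → S → ℝ≥0) (e t : S → ℝ≥0∞) : S → ℝ≥0∞ :=
  OrderHom.lfp ⟨Psi φ μ e t, Psi_mono φ μ e t⟩


/-!
Let `K = stepOp φ μ` be the transition operator of the loop in which terminated states are
absorbing. The expected runtime `L = lfp Ψ_t` satisfies `L = 1_φ (1 + e) + K L` and the
subinvariant satisfies `I ≤ 1_φ (1 + e) + K I`; unrolling both `n` times and using `I = t ≤ L`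
outside the guard gives `I ≤ L + Kⁿ (1_φ I)`. It remains to see that `⨅ n, Kⁿ (1_φ I) s = 0`
when `L s < ∞`. Then the expected number of iterations `∑ₖ P_s(τ > k)` is at most `L s`, and
conditional difference boundedness gives
`K^(N+m) (1_φ I) s ≤ K^N (1_φ I · P(τ > m)) s + c ∑_{k ≥ N} P_s(τ > k)`:
the first term tends to `0` as `m → ∞` by monotone convergence, the second as `N → ∞`.
This is the optional stopping argument, carried out on expectation transformers rather than on
the space of runs.
-/

open Finset

theorem ENNReal.tsum_iInf_of_antitone {α : Type*} {f : ℕ → α → ℝ≥0∞} (hf : Antitone f)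
    (h0 : ∑' a, f 0 a ≠ ∞) : ∑' a, ⨅ n, f n a = ⨅ n, ∑' a, f n a := by
  let : MeasurableSpace α := ⊤
  simp only [← MeasureTheory.lintegral_count]
  exact MeasureTheory.lintegral_iInf (fun _ => Measurable.of_discrete) hf
    (by rwa [MeasureTheory.lintegral_count])

namespace Module.End

variable {R M : Type*} [Semiring R] [AddCommMonoid M] [PartialOrder M] [Module R M]
  {f : Module.End R M}

theorem monotone_pow (hf : Monotone f) (n : ℕ) : Monotone ⇑(f ^ n) := by
  rw [coe_pow]
  exact hf.iterate n

variable [IsOrderedAddMonoid M]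

theorem le_sum_pow_add_pow_of_le (hf : Monotone f) {h x : M} (hx : x ≤ h + f x) (n : ℕ) :
    x ≤ ∑ k ∈ range n, (f ^ k) h + (f ^ n) x := by
  induction n with
  | zero => simp
  | succ n ih =>
    calc x ≤ ∑ k ∈ range n, (f ^ k) h + (f ^ n) (h + f x) := by
          refine ih.trans ?_
          gcongr
          exact monotone_pow hf n hx
      _ = ∑ k ∈ range (n + 1), (f ^ k) h + (f ^ (n + 1)) x := by
          rw [map_add, sum_range_succ, pow_succ, mul_apply, add_assoc]

theorem sum_pow_add_pow_le_of_le (hf : Monotone f) {h x : M} (hx : h + f x ≤ x) (n : ℕ) :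
    ∑ k ∈ range n, (f ^ k) h + (f ^ n) x ≤ x := by
  induction n with
  | zero => simp
  | succ n ih =>
    calc ∑ k ∈ range (n + 1), (f ^ k) h + (f ^ (n + 1)) x
        = ∑ k ∈ range n, (f ^ k) h + (f ^ n) (h + f x) := by
          rw [map_add, sum_range_succ, pow_succ, mul_apply, add_assoc]
      _ ≤ x := by
          refine le_trans ?_ ih
          gcongr
          exact monotone_pow hf n hx

end Module.End

section StepOperator

variable (φ : Set S) (μ : S → S → ℝ≥0)

noncomputable def stepOp : Module.End ℝ≥0∞ (S → ℝ≥0∞) where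
  toFun X s := ∑' s', (stepP φ μ s s' : ℝ≥0∞) * X s'
  map_add' X Y := funext fun s => by simp only [Pi.add_apply, mul_add, ENNReal.tsum_add]
  map_smul' c X := funext fun s => by
    simp only [Pi.smul_apply, smul_eq_mul, RingHom.id_apply, mul_left_comm _ c,
      ENNReal.tsum_mul_left]

variable {φ μ}

theorem stepOp_apply (X : S → ℝ≥0∞) (s : S) :
    stepOp φ μ X s = ∑' s', (stepP φ μ s s' : ℝ≥0∞) * X s' := rfl

theorem stepOp_apply_of_mem {s : S} (hs : s ∈ φ) (X : S → ℝ≥0∞) :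
    stepOp φ μ X s = wpF μ X s := by
  simp [stepOp_apply, stepP, hs, wpF]

theorem stepOp_apply_of_notMem {s : S} (hs : s ∉ φ) (X : S → ℝ≥0∞) :
    stepOp φ μ X s = X s := by
  rw [stepOp_apply, tsum_eq_single s fun s' hs' => by simp [stepP, hs, hs']]
  simp [stepP, hs]

theorem monotone_stepOp : Monotone (stepOp φ μ) := fun _ _ h _ =>
  ENNReal.tsum_le_tsum fun s' => mul_le_mul_right (h s') _

theorem exists_pow_stepOp_apply_eq_tsum (n : ℕ) (s : S) :
    ∃ w : S → ℝ≥0∞, ∀ X, (stepOp φ μ ^ n) X s = ∑' u, w u * X u := by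
  induction n with
  | zero => exact ⟨fun u => if u = s then 1 else 0, fun X => by simp⟩
  | succ n ih =>
    obtain ⟨w, hw⟩ := ih
    refine ⟨fun u => ∑' v, w v * stepP φ μ v u, fun X => ?_⟩
    rw [pow_succ, Module.End.mul_apply, hw]
    simp only [stepOp_apply, ← ENNReal.tsum_mul_left, ← ENNReal.tsum_mul_right, mul_assoc]
    exact ENNReal.tsum_comm

theorem stepOp_le_one (hμ : ∀ s, ∑' s', μ s s' = 1) {X : S → ℝ≥0∞} (hX : X ≤ 1) :
    stepOp φ μ X ≤ 1 := by
  intro s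
  by_cases hs : s ∈ φ
  · have hsum : Summable (μ s) := by
      by_contra h
      simpa [tsum_eq_zero_of_not_summable h] using hμ s
    calc stepOp φ μ X s ≤ ∑' s', (μ s s' : ℝ≥0∞) * 1 := by
          rw [stepOp_apply_of_mem hs, wpF]
          gcongr with s'
          exact hX s'
      _ = 1 := by simp only [mul_one, ← ENNReal.coe_tsum hsum, hμ s, ENNReal.coe_one]
  · rw [stepOp_apply_of_notMem hs]
    exact hX s

theorem stepOp_indicator_one_le (hμ : ∀ s, ∑' s', μ s s' = 1) :
    stepOp φ μ (φ.indicator 1) ≤ φ.indicator 1 := by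
  intro s
  by_cases hs : s ∈ φ
  · simpa [hs] using stepOp_le_one hμ (φ.indicator_le_self 1) s
  · rw [stepOp_apply_of_notMem hs]

variable (φ μ) in
/-- `survivalProb φ μ m s` is `P_s(τ > m)`: the run from `s` is still inside the guard after
`m` steps. -/
noncomputable def survivalProb (m : ℕ) : S → ℝ≥0∞ :=
  (stepOp φ μ ^ m) (φ.indicator 1)

theorem pow_stepOp_survivalProb (n m : ℕ) :
    (stepOp φ μ ^ n) (survivalProb φ μ m) = survivalProb φ μ (n + m) := by
  rw [survivalProb, survivalProb, pow_add, Module.End.mul_apply]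

theorem stepOp_survivalProb (m : ℕ) :
    stepOp φ μ (survivalProb φ μ m) = survivalProb φ μ (m + 1) := by
  rw [survivalProb, survivalProb, pow_succ', Module.End.mul_apply]

theorem antitone_survivalProb (hμ : ∀ s, ∑' s', μ s s' = 1) : Antitone (survivalProb φ μ) :=
  antitone_nat_of_succ_le fun m => by
    rw [survivalProb, survivalProb, pow_succ, Module.End.mul_apply]
    exact Module.End.monotone_pow monotone_stepOp m (stepOp_indicator_one_le hμ)

theorem survivalProb_le_one (hμ : ∀ s, ∑' s', μ s s' = 1) (m : ℕ) : survivalProb φ μ m ≤ 1 :=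
  (antitone_survivalProb hμ (Nat.zero_le m)).trans (φ.indicator_le_self 1)

theorem stepOp_indicator_mul_survivalProb_le (hμ : ∀ s, ∑' s', μ s s' = 1) (I : S → ℝ≥0∞)
    (m : ℕ) :
    stepOp φ μ (φ.indicator I * survivalProb φ μ m) ≤
      φ.indicator I * survivalProb φ μ (m + 1) + dExp φ μ I := by
  set p := survivalProb φ μ m
  have hp : p ≤ 1 := survivalProb_le_one hμ m
  intro s
  by_cases hs : s ∈ φ
  · rw [← stepOp_survivalProb]
    simp only [Pi.add_apply, Pi.mul_apply, stepOp_apply_of_mem hs, wpF, dExp,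
      Set.indicator_of_mem hs, if_pos hs]
    calc ∑' s', (μ s s' : ℝ≥0∞) * (φ.indicator I s' * p s')
        ≤ ∑' s', (I s * ((μ s s' : ℝ≥0∞) * p s')
            + (μ s s' : ℝ≥0∞) * ((I s' - I s) ⊔ (I s - I s'))) := by
          gcongr with s'
          calc (μ s s' : ℝ≥0∞) * (φ.indicator I s' * p s')
              ≤ (μ s s' : ℝ≥0∞) * ((I s + ((I s' - I s) ⊔ (I s - I s'))) * p s') := by
                gcongr
                exact (φ.indicator_le_self I s').trans
                  (le_add_tsub.trans (by gcongr; exact le_sup_left))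
            _ = I s * ((μ s s' : ℝ≥0∞) * p s')
                + (μ s s' : ℝ≥0∞) * (((I s' - I s) ⊔ (I s - I s')) * p s') := by ring
            _ ≤ _ := by
                gcongr
                exact mul_le_of_le_one_right' (hp s')
      _ = I s * ∑' s', (μ s s' : ℝ≥0∞) * p s'
            + ∑' s', (μ s s' : ℝ≥0∞) * ((I s' - I s) ⊔ (I s - I s')) := by
          rw [ENNReal.tsum_add, ENNReal.tsum_mul_left]
  · simp [stepOp_apply_of_notMem hs, hs]

theorem pow_stepOp_indicator_le (hμ : ∀ s, ∑' s', μ s s' = 1) (I : S → ℝ≥0∞) (m : ℕ) :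
    (stepOp φ μ ^ m) (φ.indicator I) ≤
      φ.indicator I * survivalProb φ μ m + ∑ k ∈ range m, (stepOp φ μ ^ k) (dExp φ μ I) := by
  induction m with
  | zero =>
    intro s
    by_cases hs : s ∈ φ <;> simp [survivalProb, hs]
  | succ m ih =>
    calc (stepOp φ μ ^ (m + 1)) (φ.indicator I)
        ≤ stepOp φ μ (φ.indicator I * survivalProb φ μ m
            + ∑ k ∈ range m, (stepOp φ μ ^ k) (dExp φ μ I)) := by
          rw [pow_succ', Module.End.mul_apply]
          exact monotone_stepOp ih
      _ ≤ φ.indicator I * survivalProb φ μ (m + 1) + dExp φ μ I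
            + ∑ k ∈ range m, (stepOp φ μ ^ (k + 1)) (dExp φ μ I) := by
          rw [map_add, map_sum]
          gcongr with k
          · exact stepOp_indicator_mul_survivalProb_le hμ I m
          · rw [pow_succ', Module.End.mul_apply]
      _ = _ := by
          rw [sum_range_succ', pow_zero, Module.End.one_apply, add_assoc,
            add_comm (dExp φ μ I)]

theorem iInf_pow_stepOp_mul_eq_zero {n : ℕ} {s : S} {X : S → ℝ≥0∞} {Y : ℕ → S → ℝ≥0∞}
    (hY : Antitone Y) (hY₀ : Y 0 ≤ 1) (hX : (stepOp φ μ ^ n) X s ≠ ∞)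
    (hYs : ⨅ m, (stepOp φ μ ^ n) (Y m) s = 0) :
    ⨅ m, (stepOp φ μ ^ n) (X * Y m) s = 0 := by
  obtain ⟨w, hw⟩ := exists_pow_stepOp_apply_eq_tsum (φ := φ) (μ := μ) n s
  simp only [hw, Pi.mul_apply] at hX hYs ⊢
  have hwY : ∀ u, w u * ⨅ m, Y m u = 0 := by
    refine ENNReal.tsum_eq_zero.1 (nonpos_iff_eq_zero.1 (hYs ▸ le_iInf fun m => ?_))
    gcongr with u
    exact iInf_le _ m
  rw [← ENNReal.tsum_iInf_of_antitone (fun m m' h u => by gcongr; exact hY h u)]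
  · refine ENNReal.tsum_eq_zero.2 fun u => ?_
    have hwX : w u * X u ≠ ∞ := ENNReal.ne_top_of_tsum_ne_top hX u
    simp_rw [← mul_assoc]
    rw [← ENNReal.mul_iInf fun h => absurd h hwX, mul_right_comm, hwY u, zero_mul]
  · refine ne_top_of_le_ne_top hX (ENNReal.tsum_le_tsum fun u => ?_)
    gcongr
    exact mul_le_of_le_one_right' (hY₀ u)

theorem pow_add_stepOp_indicator_le (hμ : ∀ s, ∑' s', μ s s' = 1) {I : S → ℝ≥0∞} {c : ℝ≥0}
    (hc : ∀ s, dExp φ μ I s ≤ c) (N m : ℕ) (s : S) :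
    (stepOp φ μ ^ (N + m)) (φ.indicator I) s ≤
      (stepOp φ μ ^ N) (φ.indicator I * survivalProb φ μ m) s
        + c * ∑' k, survivalProb φ μ (k + N) s := by
  have hD : dExp φ μ I ≤ (c : ℝ≥0∞) • survivalProb φ μ 0 := by
    intro u
    by_cases hu : u ∈ φ
    · simpa [survivalProb, hu] using hc u
    · simp [dExp, hu]
  calc (stepOp φ μ ^ (N + m)) (φ.indicator I) s
      ≤ (stepOp φ μ ^ N) (φ.indicator I * survivalProb φ μ m
          + ∑ k ∈ range m, (stepOp φ μ ^ k) (dExp φ μ I)) s := by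
        rw [pow_add, Module.End.mul_apply]
        exact Module.End.monotone_pow monotone_stepOp N (pow_stepOp_indicator_le hμ I m) s
    _ ≤ (stepOp φ μ ^ N) (φ.indicator I * survivalProb φ μ m) s
          + ∑ k ∈ range m, c * survivalProb φ μ (k + N) s := by
        rw [map_add, map_sum]
        simp only [Pi.add_apply, Finset.sum_apply, ← Module.End.mul_apply, ← pow_add]
        gcongr with k
        rw [add_comm N k, ← smul_eq_mul, ← Pi.smul_apply, ← add_zero (k + N),
          ← pow_stepOp_survivalProb, ← map_smul]
        exact Module.End.monotone_pow monotone_stepOp _ hD s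
    _ ≤ _ := by
        rw [← mul_sum]
        gcongr
        exact ENNReal.sum_le_tsum _

theorem iInf_pow_stepOp_indicator_eq_zero (hμ : ∀ s, ∑' s', μ s s' = 1) {I : S → ℝ≥0∞}
    {s : S} (hIs : I s ≠ ∞) {c : ℝ≥0} (hc : ∀ s, dExp φ μ I s ≤ c)
    (hsurv : ∑' k, survivalProb φ μ k s ≠ ∞) :
    ⨅ n, (stepOp φ μ ^ n) (φ.indicator I) s = 0 := by
  have hfin (N : ℕ) : (stepOp φ μ ^ N) (φ.indicator I) s ≠ ∞ := by
    have h := pow_add_stepOp_indicator_le hμ hc 0 N s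
    simp only [zero_add, add_zero, pow_zero, Module.End.one_apply, Pi.mul_apply] at h
    refine ne_top_of_le_ne_top (ENNReal.add_ne_top.2 ⟨?_, ENNReal.mul_ne_top ENNReal.coe_ne_top
      hsurv⟩) h
    exact ne_top_of_le_ne_top hIs <| (mul_le_of_le_one_right' (survivalProb_le_one hμ N s)).trans
      (φ.indicator_le_self I s)
  have hsurv_lim (N : ℕ) : ⨅ m, (stepOp φ μ ^ N) (survivalProb φ μ m) s = 0 := by
    simp only [pow_stepOp_survivalProb]
    refine le_antisymm (ge_of_tendsto' ((ENNReal.tendsto_atTop_zero_of_tsum_ne_top hsurv).comp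
      (tendsto_add_atTop_nat N)) fun m => ?_) zero_le
    rw [Function.comp_apply, add_comm]
    exact iInf_le _ m
  have htail : Tendsto (fun N => (c : ℝ≥0∞) * ∑' k, survivalProb φ μ (k + N) s) atTop (𝓝 0) := by
    simpa using ENNReal.Tendsto.const_mul (ENNReal.tendsto_sum_nat_add _ hsurv)
      (Or.inr ENNReal.coe_ne_top)
  refine le_antisymm (ge_of_tendsto' htail fun N => ?_) zero_le
  calc ⨅ n, (stepOp φ μ ^ n) (φ.indicator I) s
      ≤ ⨅ m, (stepOp φ μ ^ (N + m)) (φ.indicator I) s := le_iInf fun m => iInf_le _ _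
    _ ≤ ⨅ m, ((stepOp φ μ ^ N) (φ.indicator I * survivalProb φ μ m) s
          + c * ∑' k, survivalProb φ μ (k + N) s) :=
        iInf_mono fun m => pow_add_stepOp_indicator_le hμ hc N m s
    _ = c * ∑' k, survivalProb φ μ (k + N) s := by
        rw [← ENNReal.iInf_add, iInf_pow_stepOp_mul_eq_zero (antitone_survivalProb hμ)
          (survivalProb_le_one hμ 0) (hfin N) (hsurv_lim N), zero_add]

end StepOperator

section Runtime

variable {φ : Set S} {μ : S → S → ℝ≥0} {e t : S → ℝ≥0∞}

theorem Psi_lfpPsi : Psi φ μ e t (lfpPsi φ μ e t) = lfpPsi φ μ e t :=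
  OrderHom.map_lfp ⟨Psi φ μ e t, Psi_mono φ μ e t⟩

theorem le_indicator_add_stepOp_of_le_Psi {X : S → ℝ≥0∞} (hX : X ≤ Psi φ μ e t X) :
    X ≤ φ.indicator (1 + e) + stepOp φ μ X := by
  intro s
  by_cases hs : s ∈ φ
  · simpa [Psi, hs, stepOp_apply_of_mem hs] using hX s
  · simp [hs, stepOp_apply_of_notMem hs]

theorem indicator_add_stepOp_lfpPsi :
    φ.indicator (1 + e) + stepOp φ μ (lfpPsi φ μ e t) = lfpPsi φ μ e t := by
  funext s
  by_cases hs : s ∈ φ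
  · conv_rhs => rw [← Psi_lfpPsi]
    simp [Psi, hs, stepOp_apply_of_mem hs]
  · simp [hs, stepOp_apply_of_notMem hs]

theorem indicator_compl_le_lfpPsi {I : S → ℝ≥0∞} (hharm : Harmonizes φ I t) :
    φᶜ.indicator I ≤ lfpPsi φ μ e t := by
  intro s
  by_cases hs : s ∈ φ
  · simp [hs]
  · rw [Set.indicator_of_mem (Set.mem_compl hs), hharm s hs, ← Psi_lfpPsi]
    simp [Psi, hs]

theorem tsum_survivalProb_le_lfpPsi (s : S) :
    ∑' k, survivalProb φ μ k s ≤ lfpPsi φ μ e t s := by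
  refine ENNReal.tsum_le_of_sum_range_le fun n => ?_
  calc ∑ k ∈ range n, survivalProb φ μ k s
      ≤ ∑ k ∈ range n, (stepOp φ μ ^ k) (φ.indicator (1 + e)) s := by
        gcongr with k
        exact Module.End.monotone_pow monotone_stepOp k
          (Set.indicator_mono fun _ => le_self_add) s
    _ ≤ (∑ k ∈ range n, (stepOp φ μ ^ k) (φ.indicator (1 + e))
          + (stepOp φ μ ^ n) (lfpPsi φ μ e t)) s := by
        simp only [Pi.add_apply, Finset.sum_apply]
        exact le_self_add
    _ ≤ lfpPsi φ μ e t s :=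
        Module.End.sum_pow_add_pow_le_of_le monotone_stepOp indicator_add_stepOp_lfpPsi.le n s

theorem le_lfpPsi_add_pow_stepOp_indicator {I : S → ℝ≥0∞} (hharm : Harmonizes φ I t)
    (hsub : I ≤ Psi φ μ e t I) (n : ℕ) :
    I ≤ lfpPsi φ μ e t + (stepOp φ μ ^ n) (φ.indicator I) := by
  set K := stepOp φ μ
  set h := φ.indicator (1 + e)
  calc I ≤ ∑ k ∈ range n, (K ^ k) h + (K ^ n) I :=
        Module.End.le_sum_pow_add_pow_of_le monotone_stepOp
          (le_indicator_add_stepOp_of_le_Psi hsub) n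
    _ = ∑ k ∈ range n, (K ^ k) h + (K ^ n) (φᶜ.indicator I) + (K ^ n) (φ.indicator I) := by
        rw [add_assoc, ← map_add, Set.indicator_compl_add_self]
    _ ≤ ∑ k ∈ range n, (K ^ k) h + (K ^ n) (lfpPsi φ μ e t) + (K ^ n) (φ.indicator I) := by
        gcongr
        exact Module.End.monotone_pow monotone_stepOp n (indicator_compl_le_lfpPsi hharm)
    _ ≤ lfpPsi φ μ e t + (K ^ n) (φ.indicator I) := by
        gcongr
        exact Module.End.sum_pow_add_pow_le_of_le monotone_stepOp
          indicator_add_stepOp_lfpPsi.le n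

end Runtime

theorem lower_bound_ert_general {S : Type*}
    (φ : Set S) (μ : S → S → ℝ≥0) (hμ : ∀ s, ∑' s', μ s s' = 1)
    (e t I : S → ℝ≥0∞) (hI : FinExp I)
    (hharm : Harmonizes φ I t) (hcdb : CondDiffBdd φ μ I)
    (hsub : I ≤ Psi φ μ e t I) :
    I ≤ lfpPsi φ μ e t := by
  intro s
  by_cases hLs : lfpPsi φ μ e t s = ∞
  · exact hLs ▸ le_top
  obtain ⟨c, hc⟩ := hcdb
  have hvanish := iInf_pow_stepOp_indicator_eq_zero hμ (hI s).ne hc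
    (ne_top_of_le_ne_top hLs (tsum_survivalProb_le_lfpPsi s))
  calc I s ≤ ⨅ n, (lfpPsi φ μ e t s + (stepOp φ μ ^ n) (φ.indicator I) s) :=
        le_iInf fun n => le_lfpPsi_add_pow_stepOp_indicator hharm hsub n s
    _ = lfpPsi φ μ e t s := by rw [← ENNReal.add_iInf, hvanish, add_zero]

/-- **Inductive lower bounds on expected runtimes.** Let `t` and `I` be finite
expectations such that `I` harmonizes with `t`, `I` is conditionally difference bounded,
and `Φ_t(I)` is finite. Every runtime subinvariant `I ⪯ Ψ_t(I)` is a lower bound on the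
expected runtime `lfp Ψ_t` of the loop. -/
theorem lower_bound_ert {S : Type*} [Countable S]
    (φ : Set S) (μ : S → S → ℝ≥0) (hμ : ∀ s, ∑' s', μ s s' = 1)
    (e t I : S → ℝ≥0∞) (ht : FinExp t) (hI : FinExp I)
    (hharm : Harmonizes φ I t) (hcdb : CondDiffBdd φ μ I)
    (hPhiI : FinExp (Phi φ μ t I))
    (hsub : I ≤ Psi φ μ e t I) :
    I ≤ lfpPsi φ μ e t :=
  lower_bound_ert_general φ μ hμ e t I hI hharm hcdb hsub
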